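/- For every integer q with 2q > k, the map induced by δ−1 on rationalized graded pieces, (δ−1)_ℚ : gr_{q−1}^F∧ᵏH_ℚ → gr_q^F∧ᵏH_ℚ, is surjective. -/

import Mathlib

/-- The filtration `F_q ⋀^k H = (⋀^q Y) ∧ (⋀^{k-q} H)`: the span of simple wedges
`y₁ ∧ ⋯ ∧ y_q ∧ h₁ ∧ ⋯ ∧ h_{k-q}` with the first `q` entries in `Y` (and `0` for `q > k`),
realized inside the exterior algebra. -/
noncomputable def Ffil {H : Type} [AddCommGroup H] [Module ℤ H]
    (Y : Submodule ℤ H) (k q : ℕ) : Submodule ℤ (ExteriorAlgebra ℤ H) :=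
  if q ≤ k then
    Submodule.span ℤ {z | ∃ v : Fin k → H,
      (∀ i : Fin k, (i : ℕ) < q → v i ∈ Y) ∧ z = ExteriorAlgebra.ιMulti ℤ k v}
  else ⊥

/-- The map `δ - 1` induced functorially on the exterior algebra; restricted to the `k`-th
exterior power `⋀[ℤ]^k H` it is the map induced by `δ` on `⋀^k H` minus the identity. -/
noncomputable def Dmap {H : Type} [AddCommGroup H] [Module ℤ H]
    (δ : H →ₗ[ℤ] H) : ExteriorAlgebra ℤ H →ₗ[ℤ] ExteriorAlgebra ℤ H :=
  (ExteriorAlgebra.map δ).toLinearMap - LinearMap.id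

/-!
Write `N = δ - 1`. For vectors `a₁, …, a_k` and a set `S` of indices let `a_S` be their wedge
with `aᵢ` replaced by `N aᵢ` for `i ∈ S`. As `N(H) ⊆ Y`, `a_S ∈ F_{|S|}`, and as `N² = 0`, the
map `δ - 1` acts on these wedges, modulo `F_{|S|+2}`, as the up operator of the Boolean lattice:
`(δ - 1) a_S ≡ ∑_{i ∉ S} a_{S ∪ {i}}`. Since `Y` is the saturation of `N(H)`, a nonzero multiple
of each generator of `F_q` is some `a_Q` with `|Q| = q`, so it suffices that the up operator from
rank `q - 1` to rank `q` is rationally surjective when `2q > k`. Sort the `q`-sets `T` by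
`b = |T \ Q|` and let `V b` be the sum of `a_T` over each class; the up operator sends the
corresponding sums at rank `q - 1` to `(q - b) V b + (b + 1) V (b + 1)`. Since `V b = 0` for
`b > k - q` and `k - q < q`, descending induction on `b` reaches `V 0 = a_Q`.
-/

open Finset

section Saturation

variable {M : Type*} [AddCommGroup M] [Module ℤ M]

def Submodule.saturation (P : Submodule ℤ M) : Submodule ℤ M where
  carrier := {x | ∃ n : ℤ, n ≠ 0 ∧ n • x ∈ P}
  zero_mem' := ⟨1, one_ne_zero, by simp⟩
  add_mem' := by
    rintro x y ⟨n, hn, hx⟩ ⟨m, hm, hy⟩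
    refine ⟨n * m, mul_ne_zero hn hm, ?_⟩
    rw [zsmul_add, mul_zsmul', mul_zsmul]
    exact P.add_mem (zsmul_mem hx m) (zsmul_mem hy n)
  smul_mem' := by
    rintro c x ⟨n, hn, hx⟩
    refine ⟨n, hn, ?_⟩
    rw [smul_comm]
    exact P.smul_mem c hx

theorem Submodule.le_saturation (P : Submodule ℤ M) : P ≤ P.saturation :=
  fun x hx => ⟨1, one_ne_zero, by rwa [one_smul]⟩

theorem Submodule.mem_saturation_of_smul_mem {P : Submodule ℤ M} {n : ℤ} (hn : n ≠ 0) {x : M}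
    (hx : n • x ∈ P.saturation) : x ∈ P.saturation := by
  obtain ⟨m, hm, hmx⟩ := hx
  exact ⟨m * n, mul_ne_zero hm hn, by rwa [mul_smul]⟩

theorem Submodule.nsmulSaturated_saturation (P : Submodule ℤ M) :
    P.saturation.toAddSubgroup.toAddSubmonoid.NSMulSaturated := by
  intro n x hx
  refine or_iff_not_imp_left.2 fun hn => P.mem_saturation_of_smul_mem (n := n) ?_ ?_
  · exact_mod_cast hn
  · rwa [natCast_zsmul]

end Saturation

section UpOperator

variable {α M : Type*} [DecidableEq α]

theorem Finset.sum_powersetCard_sum_sdiff_insert [AddCommMonoid M] (S : Finset α) (n : ℕ)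
    (f : Finset α → M) :
    ∑ I ∈ S.powersetCard n, ∑ i ∈ S \ I, f (insert i I)
      = (n + 1) • ∑ J ∈ S.powersetCard (n + 1), f J := by
  have hcount : ∀ J ∈ S.powersetCard (n + 1),
      (n + 1) • f J = ∑ _j ∈ J, f J := fun J hJ => by
    rw [sum_const, (mem_powersetCard.1 hJ).2]
  rw [smul_sum, sum_congr rfl hcount, sum_sigma', sum_sigma']
  refine sum_nbij' (fun p => ⟨insert p.2 p.1, p.2⟩) (fun p => ⟨p.1.erase p.2, p.2⟩)
    ?_ ?_ ?_ ?_ fun _ _ => rfl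
  · rintro ⟨I, i⟩ hp
    simp only [mem_sigma, mem_powersetCard, mem_sdiff] at hp ⊢
    exact ⟨⟨insert_subset hp.2.1 hp.1.1, by rw [card_insert_of_notMem hp.2.2, hp.1.2]⟩,
      mem_insert_self _ _⟩
  · rintro ⟨J, j⟩ hp
    simp only [mem_sigma, mem_powersetCard, mem_sdiff] at hp ⊢
    exact ⟨⟨(erase_subset _ _).trans hp.1.1, by rw [card_erase_of_mem hp.2, hp.1.2]; rfl⟩,
      hp.1.1 hp.2, notMem_erase _ _⟩
  · rintro ⟨I, i⟩ hp
    simp only [mem_sigma, mem_powersetCard, mem_sdiff] at hp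
    simp [erase_insert hp.2.2]
  · rintro ⟨J, j⟩ hp
    simp only [mem_sigma, mem_powersetCard] at hp
    simp [insert_erase hp.2]

variable [Fintype α]

def Finset.bisliceSum [AddCommMonoid M] (Q : Finset α) (e : Finset α → M) (a b : ℕ) : M :=
  ∑ B ∈ Q.powersetCard a, ∑ I ∈ Qᶜ.powersetCard b, e (B ∪ I)

theorem Finset.sum_sum_sum_compl_insert_eq_bisliceSum [AddCommMonoid M] (Q : Finset α)
    (e : Finset α → M) (a b : ℕ) :
    ∑ B ∈ Q.powersetCard a, ∑ I ∈ Qᶜ.powersetCard b, ∑ i ∈ (B ∪ I)ᶜ, e (insert i (B ∪ I))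
      = (a + 1) • Q.bisliceSum e (a + 1) b + (b + 1) • Q.bisliceSum e a (b + 1) := by
  have hsplit : ∀ B ∈ Q.powersetCard a, ∀ I ∈ Qᶜ.powersetCard b,
      ∑ i ∈ (B ∪ I)ᶜ, e (insert i (B ∪ I))
        = ∑ i ∈ Q \ B, e (insert i B ∪ I) + ∑ i ∈ Qᶜ \ I, e (B ∪ insert i I) := by
    intro B hB I hI
    have hBQ := (mem_powersetCard.1 hB).1
    have hIQ := (mem_powersetCard.1 hI).1
    have hcompl : (B ∪ I)ᶜ = (Q \ B) ∪ (Qᶜ \ I) := by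
      ext i
      have := @hBQ i
      have := @hIQ i
      simp only [mem_compl, mem_union, mem_sdiff] at *
      tauto
    rw [hcompl, sum_union (disjoint_compl_right.mono sdiff_subset sdiff_subset)]
    simp only [insert_union, union_insert]
  rw [sum_congr rfl fun B hB => sum_congr rfl (hsplit B hB)]
  simp only [sum_add_distrib, bisliceSum]
  congr 1
  · rw [sum_comm, sum_comm (s := Q.powersetCard (a + 1)), smul_sum]
    exact sum_congr rfl fun I _ => sum_powersetCard_sum_sdiff_insert Q a (fun B => e (B ∪ I))
  · rw [smul_sum]
    exact sum_congr rfl fun B _ => sum_powersetCard_sum_sdiff_insert Qᶜ b (e <| B ∪ ·)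

theorem Finset.mem_of_forall_sum_compl_insert_mem [AddCommGroup M] (P : AddSubgroup M)
    (hP : P.NSMulSaturated) (e : Finset α → M) (Q : Finset α)
    (hQ : Fintype.card α < 2 * #Q)
    (he : ∀ S : Finset α, #S + 1 = #Q → ∑ i ∈ Sᶜ, e (insert i S) ∈ P) : e Q ∈ P := by
  have hQc : #Qᶜ + 1 ≤ #Q := by rw [card_compl]; omega
  have hup : ∀ a b, a + b + 1 = #Q →
      (a + 1) • Q.bisliceSum e (a + 1) b + (b + 1) • Q.bisliceSum e a (b + 1) ∈ P := by
    intro a b hab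
    rw [← sum_sum_sum_compl_insert_eq_bisliceSum]
    refine sum_mem fun B hB => sum_mem fun I hI => he _ ?_
    rw [mem_powersetCard] at hB hI
    rw [card_union_of_disjoint (disjoint_compl_right.mono hB.1 hI.1), hB.2, hI.2, hab]
  have hdesc : ∀ a, #Q - (#Qᶜ + 1) ≤ a → a ≤ #Q → Q.bisliceSum e a (#Q - a) ∈ P := by
    intro a ha
    induction a, ha using Nat.le_induction with
    | base =>
      intro _
      rw [show #Q - (#Q - (#Qᶜ + 1)) = #Qᶜ + 1 by omega]
      simp [bisliceSum]
    | succ a ha ih =>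
      intro ha'
      have hstep := hup a (#Q - (a + 1)) (by omega)
      rw [show #Q - (a + 1) + 1 = #Q - a by omega] at hstep
      refine (hP ?_).resolve_left a.succ_ne_zero
      simpa using P.sub_mem hstep (P.nsmul_mem (ih (by omega)) (#Q - a))
  simpa [bisliceSum] using hdesc #Q (by omega) le_rfl

end UpOperator

section ExteriorPower

variable {H : Type} [AddCommGroup H] [Module ℤ H]

theorem ιMulti_mem_Ffil (Y : Submodule ℤ H) {k p : ℕ} (v : Fin k → H) (S : Finset (Fin k))
    (hp : p ≤ #S) (hS : ∀ i ∈ S, v i ∈ Y) : ExteriorAlgebra.ιMulti ℤ k v ∈ Ffil Y k p := by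
  obtain ⟨T, hTS, hT⟩ := exists_subset_card_eq hp
  have hpk : p ≤ k := hT ▸ (card_le_univ T).trans_eq (Fintype.card_fin k)
  let e : {i : Fin k // (i : ℕ) < p} ≃ {i // i ∈ T} :=
    Fintype.equivOfCardEq (by rw [Fintype.card_fin_lt_of_le hpk, Fintype.card_coe, hT])
  have hσ : ExteriorAlgebra.ιMulti ℤ k (v ∘ e.extendSubtype) ∈ Ffil Y k p := by
    rw [Ffil, if_pos hpk]
    exact Submodule.subset_span ⟨_, fun i hi => hS _ (hTS (e.extendSubtype_mem i hi)), rfl⟩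
  rw [AlternatingMap.map_perm] at hσ
  exact (Submodule.smul_mem_iff_of_isUnit (Ffil Y k p) (Units.isUnit _)).1 hσ

theorem Dmap_apply (δ : H →ₗ[ℤ] H) (x : ExteriorAlgebra ℤ H) :
    Dmap δ x = ExteriorAlgebra.map δ x - x :=
  rfl

noncomputable def wedgeDiffOn (δ : H →ₗ[ℤ] H) {k : ℕ} (a : Fin k → H) (S : Finset (Fin k)) :
    ExteriorAlgebra ℤ H :=
  ExteriorAlgebra.ιMulti ℤ k (S.piecewise (fun i => δ (a i) - a i) a)

theorem wedgeDiffOn_mem_Ffil (δ : H →ₗ[ℤ] H) (Y : Submodule ℤ H) (hY : ∀ h, δ h - h ∈ Y) {k p : ℕ}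
    (a : Fin k → H) {T : Finset (Fin k)} (hp : p ≤ #T) : wedgeDiffOn δ a T ∈ Ffil Y k p :=
  ιMulti_mem_Ffil Y _ T hp fun i hi => by simp [hi, hY]

theorem Dmap_wedgeDiffOn (δ : H →ₗ[ℤ] H) (hδ : ∀ h, δ (δ h - h) = δ h - h) {k : ℕ}
    (a : Fin k → H) (S : Finset (Fin k)) :
    Dmap δ (wedgeDiffOn δ a S)
      = ∑ T ∈ Sᶜ.powerset, wedgeDiffOn δ a (S ∪ T) - wedgeDiffOn δ a S := by
  set u := S.piecewise (fun i => δ (a i) - a i) a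
  have hδu : δ ∘ u = Sᶜ.piecewise ((fun i => δ (a i) - a i) + u) u := by
    ext i
    by_cases hi : i ∈ S <;> simp [u, hi, hδ]
  have hunion : ∀ T ∈ Sᶜ.powerset, T.piecewise (fun i => δ (a i) - a i) u
      = (S ∪ T).piecewise (fun i => δ (a i) - a i) a := by
    intro T _
    ext i
    by_cases hi : i ∈ T <;> by_cases hi' : i ∈ S <;> simp [u, hi, hi']
  rw [wedgeDiffOn, Dmap_apply, ExteriorAlgebra.map_apply_ιMulti, hδu,
    ← AlternatingMap.coe_multilinearMap, MultilinearMap.map_piecewise_add]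
  exact congrArg (· - _) (sum_congr rfl fun T hT => congrArg _ (hunion T hT))

theorem Dmap_wedgeDiffOn_sub_sum_mem_Ffil (δ : H →ₗ[ℤ] H)
    (hδ : ∀ h, δ (δ h - h) = δ h - h) (Y : Submodule ℤ H) (hY : ∀ h, δ h - h ∈ Y) {k : ℕ}
    (a : Fin k → H) (S : Finset (Fin k)) :
    Dmap δ (wedgeDiffOn δ a S) - ∑ i ∈ Sᶜ, wedgeDiffOn δ a (insert i S) ∈ Ffil Y k (#S + 2) := by
  have hsmall : wedgeDiffOn δ a S + ∑ i ∈ Sᶜ, wedgeDiffOn δ a (insert i S)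
      = ∑ T ∈ Sᶜ.powersetCard 0 ∪ Sᶜ.powersetCard 1, wedgeDiffOn δ a (S ∪ T) := by
    rw [sum_union (pairwise_disjoint_powersetCard _ zero_ne_one), powersetCard_zero,
      powersetCard_one, sum_singleton, sum_map]
    simp only [Function.Embedding.coeFn_mk, union_empty, union_singleton]
  rw [Dmap_wedgeDiffOn δ hδ, sub_sub, hsmall, ← sum_sdiff_eq_sub]
  · refine sum_mem fun T hT => ?_
    simp only [mem_sdiff, mem_powerset, mem_union, mem_powersetCard, not_or, not_and] at hT
    obtain ⟨hTS, hT0, hT1⟩ := hT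
    refine wedgeDiffOn_mem_Ffil δ Y hY a ?_
    rw [card_union_of_disjoint (disjoint_right.2 fun i hi => mem_compl.1 (hTS hi))]
    have := hT0 hTS
    have := hT1 hTS
    omega
  · intro T hT
    simp only [mem_union, mem_powersetCard] at hT
    exact mem_powerset.2 (hT.elim And.left And.left)

theorem wedgeDiffOn_mem_saturation (δ : H →ₗ[ℤ] H) (hδ : ∀ h, δ (δ h - h) = δ h - h)
    (Y : Submodule ℤ H) (hY : ∀ h, δ h - h ∈ Y) {k : ℕ} (a : Fin k → H) (Q : Finset (Fin k))
    (hQ : k < 2 * #Q) :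
    wedgeDiffOn δ a Q ∈ (Ffil Y k (#Q + 1) ⊔ (Ffil Y k (#Q - 1)).map (Dmap δ)).saturation := by
  set P := Ffil Y k (#Q + 1) ⊔ (Ffil Y k (#Q - 1)).map (Dmap δ)
  refine mem_of_forall_sum_compl_insert_mem P.saturation.toAddSubgroup
    P.nsmulSaturated_saturation _ Q (by simpa using hQ) fun S hS => P.le_saturation ?_
  have hD : Dmap δ (wedgeDiffOn δ a S) ∈ P :=
    Submodule.mem_sup_right
      (Submodule.mem_map_of_mem (wedgeDiffOn_mem_Ffil δ Y hY a (by omega)))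
  have hR := Dmap_wedgeDiffOn_sub_sum_mem_Ffil δ hδ Y hY a S
  rw [show #S + 2 = #Q + 1 by omega] at hR
  simpa using P.sub_mem hD (Submodule.mem_sup_left hR)

theorem ιMulti_mem_saturation (δ : H →ₗ[ℤ] H) (hδ : ∀ h, δ (δ h - h) = δ h - h)
    (Y : Submodule ℤ H) (hY : Y = (LinearMap.range (δ - LinearMap.id)).saturation) {k : ℕ}
    (v : Fin k → H) (Q : Finset (Fin k)) (hQ : k < 2 * #Q) (hv : ∀ i ∈ Q, v i ∈ Y) :
    ExteriorAlgebra.ιMulti ℤ k v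
      ∈ (Ffil Y k (#Q + 1) ⊔ (Ffil Y k (#Q - 1)).map (Dmap δ)).saturation := by
  have hNY : ∀ h, δ h - h ∈ Y := fun h => hY ▸ Submodule.le_saturation _ ⟨h, rfl⟩
  have hscale : ∀ i, ∃ c : ℤ, c ≠ 0 ∧ ∃ w, i ∈ Q → δ w - w = c • v i := by
    intro i
    by_cases hi : i ∈ Q
    · obtain ⟨c, hc, w, hw⟩ := hY ▸ hv i hi
      exact ⟨c, hc, w, fun _ => hw⟩
    · exact ⟨1, one_ne_zero, 0, fun h => absurd h hi⟩
  choose c hc w hw using hscale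
  have hwedge : wedgeDiffOn δ (Q.piecewise w v) Q
      = (∏ i, Q.piecewise c 1 i) • ExteriorAlgebra.ιMulti ℤ k v := by
    have hvec : Q.piecewise (fun i => δ (Q.piecewise w v i) - Q.piecewise w v i) (Q.piecewise w v)
        = fun i => Q.piecewise c 1 i • v i := by
      ext i
      by_cases hi : i ∈ Q <;> simp [hi, hw]
    rw [wedgeDiffOn, hvec]
    simp only [← Int.cast_smul_eq_zsmul ℤ, Int.cast_id]
    exact AlternatingMap.map_smul_univ _ _ _
  have hprod : ∏ i, Q.piecewise c 1 i ≠ 0 := prod_ne_zero_iff.2 fun i _ => by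
    by_cases hi : i ∈ Q <;> simp [hi, hc]
  refine Submodule.mem_saturation_of_smul_mem hprod ?_
  rw [← hwedge]
  exact wedgeDiffOn_mem_saturation δ hδ Y hNY _ Q hQ

end ExteriorPower

/-- Rational surjectivity, with denominators cleared. -/
theorem ceresa_stmt3_general {H : Type} [AddCommGroup H] [Module ℤ H]
    (δ : H →ₗ[ℤ] H) (hδ2 : (δ - LinearMap.id) ∘ₗ (δ - LinearMap.id) = 0)
    (Y : Submodule ℤ H)
    (hY : ∀ x : H, x ∈ Y ↔ ∃ n : ℤ, n ≠ 0 ∧ n • x ∈ LinearMap.range (δ - LinearMap.id))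
    (k q : ℕ) (hq : k < 2 * q) :
    ∀ z ∈ Ffil Y k q, ∃ n : ℤ, n ≠ 0 ∧ ∃ x ∈ Ffil Y k (q - 1),
      n • z - Dmap δ x ∈ Ffil Y k (q + 1) := by
  have hδ : ∀ h, δ (δ h - h) = δ h - h := fun h => by
    simpa [sub_eq_zero] using LinearMap.congr_fun hδ2 h
  have hYsat : Y = (LinearMap.range (δ - LinearMap.id)).saturation := by
    ext x
    exact hY x
  intro z hz
  obtain hqk | hkq := le_or_gt q k
  swap
  · rw [Ffil, if_neg (by omega), Submodule.mem_bot] at hz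
    exact ⟨1, one_ne_zero, 0, zero_mem _, by simp [hz]⟩
  let Q : Finset (Fin k) := {i | (i : ℕ) < q}
  have hQ : #Q = q := by simp [Q, Fin.card_filter_val_lt, hqk]
  suffices hz' : z ∈ (Ffil Y k (q + 1) ⊔ (Ffil Y k (q - 1)).map (Dmap δ)).saturation by
    obtain ⟨n, hn, hnz⟩ := hz'
    obtain ⟨y, hy, _, ⟨x, hx, rfl⟩, hyx⟩ := Submodule.mem_sup.1 hnz
    exact ⟨n, hn, x, hx, by rwa [← hyx, add_sub_cancel_right]⟩
  rw [Ffil, if_pos hqk] at hz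
  refine Submodule.span_le.2 ?_ hz
  rintro _ ⟨v, hv, rfl⟩
  have hmem := ιMulti_mem_saturation δ hδ Y hYsat v Q (hQ ▸ hq) fun i hi =>
    hv i (by simpa [Q] using hi)
  rwa [hQ] at hmem

/-- For `2q > k`, the map `(δ−1)_ℚ : gr_{q−1}^F ⋀ᵏH_ℚ → gr_q^F ⋀ᵏH_ℚ` induced by `δ−1`
on rationalized graded pieces is surjective; equivalently, for every `z ∈ F_q⋀ᵏH` there are
a nonzero integer `n` and `x ∈ F_{q−1}⋀ᵏH` with `n•z − (δ−1)x ∈ F_{q+1}⋀ᵏH`. -/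
theorem ceresa_stmt3 {H : Type} [AddCommGroup H] [Module ℤ H]
    [Module.Free ℤ H] [Module.Finite ℤ H]
    (δ : H →ₗ[ℤ] H) (hδ2 : (δ - LinearMap.id) ∘ₗ (δ - LinearMap.id) = 0)
    (Y : Submodule ℤ H)
    (hY : ∀ x : H, x ∈ Y ↔ ∃ n : ℤ, n ≠ 0 ∧ n • x ∈ LinearMap.range (δ - LinearMap.id))
    (k q : ℕ) (hq : k < 2 * q) :
    ∀ z ∈ Ffil Y k q, ∃ n : ℤ, n ≠ 0 ∧ ∃ x ∈ Ffil Y k (q - 1),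
      n • z - Dmap δ x ∈ Ffil Y k (q + 1) :=
  ceresa_stmt3_general δ hδ2 Y hY k q hq
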